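/- Let A be a finite-dimensional algebra over a field and f an idempotent of A such that projdim_A(A/⟨f⟩) ≤ 1 and the algebra A/⟨f⟩ has finite global dimension. Then every finitely generated A/⟨f⟩-module, viewed as an A-module, has finite projective dimension over A. -/

import Mathlib

open CategoryTheory

noncomputable section

/-- Vanishing of the `n`-th Ext group of two `A`-modules. -/
def ExtVanish (A : Type) [Ring A] (n : ℕ) (X Y : ModuleCat.{0} A) : Prop :=
  Limits.IsZero (((Ext ℤ (ModuleCat.{0} A) n).obj (Opposite.op X)).obj Y)

/-- `M` belongs to `add X`: it is a direct summand of a finite direct sum of copies of `X`. -/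
def InAdd (A : Type) [Ring A] (X M : ModuleCat.{0} A) : Prop :=
  ∃ (n : ℕ) (i : M →ₗ[A] (Fin n → X)) (p : (Fin n → X) →ₗ[A] M),
    p.comp i = LinearMap.id

/-- `N` is a (first) syzygy of `M`: there is an exact sequence `0 → N → P → M → 0`
with `P` projective. -/
def IsSyzygyOf (A : Type) [Ring A] (N M : ModuleCat.{0} A) : Prop :=
  ∃ (P : ModuleCat.{0} A), Module.Projective A P ∧
    ∃ (ι : N →ₗ[A] P) (π : P →ₗ[A] M),
      Function.Injective ι ∧ Function.Surjective π ∧ Function.Exact ι π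

/-- `N` is an `n`-th syzygy of `M`. -/
def IsNthSyzygyOf (A : Type) [Ring A] : ℕ → ModuleCat.{0} A → ModuleCat.{0} A → Prop
  | 0, N, M => Nonempty (N ≅ M)
  | n + 1, N, M => ∃ K : ModuleCat.{0} A, IsSyzygyOf A K M ∧ IsNthSyzygyOf A n N K

/-- `N` is a (first) cosyzygy of `M`: there is an exact sequence `0 → M → I → N → 0`
with `I` injective. -/
def IsCosyzygyOf (A : Type) [Ring A] (N M : ModuleCat.{0} A) : Prop :=
  ∃ (I : ModuleCat.{0} A), Module.Injective A I ∧
    ∃ (ι : M →ₗ[A] I) (π : I →ₗ[A] N),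
      Function.Injective ι ∧ Function.Surjective π ∧ Function.Exact ι π

/-- `N` is an `n`-th cosyzygy of `M`. -/
def IsNthCosyzygyOf (A : Type) [Ring A] : ℕ → ModuleCat.{0} A → ModuleCat.{0} A → Prop
  | 0, N, M => Nonempty (N ≅ M)
  | n + 1, N, M => ∃ K : ModuleCat.{0} A, IsCosyzygyOf A K M ∧ IsNthCosyzygyOf A n N K

/-- The projective dimension of `M` is at most `n`. -/
def ProjDimLE (A : Type) [Ring A] (n : ℕ) (M : ModuleCat.{0} A) : Prop :=
  ∃ K : ModuleCat.{0} A, IsNthSyzygyOf A n K M ∧ Module.Projective A K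

/-- The injective dimension of `M` is at most `n`. -/
def InjDimLE (A : Type) [Ring A] (n : ℕ) (M : ModuleCat.{0} A) : Prop :=
  ∃ K : ModuleCat.{0} A, IsNthCosyzygyOf A n K M ∧ Module.Injective A K

/-- The underlying type of `D(A) = Hom_k(A, k)`. -/
def DualMod (k A : Type) [Field k] [Ring A] [Algebra k A] : Type := A →ₗ[k] k

instance (k A : Type) [Field k] [Ring A] [Algebra k A] : AddCommGroup (DualMod k A) :=
  inferInstanceAs (AddCommGroup (A →ₗ[k] k))

/-- Auxiliary scalar action for `DualMod`. -/
def dualSMul (k A : Type) [Field k] [Ring A] [Algebra k A] (a : A) (φ : A →ₗ[k] k) :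
    A →ₗ[k] k := φ.comp (LinearMap.mulRight k a)

/-- The left `A`-module structure on `D(A)`: `(a • φ) x = φ (x * a)`. -/
instance (k A : Type) [Field k] [Ring A] [Algebra k A] : Module A (DualMod k A) where
  smul a φ := dualSMul k A a φ
  one_smul φ := by
    show dualSMul k A 1 φ = φ
    unfold dualSMul; ext x; simp [LinearMap.mulRight]; rfl
  mul_smul a b φ := by
    show dualSMul k A (a * b) φ = dualSMul k A a (dualSMul k A b φ)
    unfold dualSMul; ext x; simp [LinearMap.mulRight, mul_assoc]
    exact congrArg (fun y => (show A →ₗ[k] k from φ) y) (mul_assoc x a b).symm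
  smul_zero a := by
    show dualSMul k A a 0 = 0
    unfold dualSMul; ext x; simp
  smul_add a φ ψ := by
    show dualSMul k A a (φ + ψ) = dualSMul k A a φ + dualSMul k A a ψ
    unfold dualSMul; ext x; rfl
  add_smul a b φ := by
    show dualSMul k A (a + b) φ = dualSMul k A a φ + dualSMul k A b φ
    unfold dualSMul; ext x; simp [LinearMap.mulRight, mul_add]
    exact map_add (show A →ₗ[k] k from φ) (x * a) (x * b)
  zero_smul φ := by
    show dualSMul k A 0 φ = 0
    unfold dualSMul; ext x; simp [LinearMap.mulRight]
    exact map_zero (show A →ₗ[k] k from φ)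

/-- `D(A)`, the dual of the right regular module, as an object of `ModuleCat A`. -/
def DualA (k A : Type) [Field k] [Ring A] [Algebra k A] : ModuleCat.{0} A :=
  ModuleCat.of A (DualMod k A)

/-- The idempotent ideal `⟨e⟩ = AeA`, as a left submodule of `A`. -/
def idemIdeal (A : Type) [Ring A] (e : A) : Submodule A A :=
  Submodule.span A (Set.range fun b : A => e * b)

/-- The quotient `A/⟨e⟩` as a left `A`-module. -/
def quotMod (A : Type) [Ring A] (e : A) : ModuleCat.{0} A :=
  ModuleCat.of A (A ⧸ idemIdeal A e)

/-- The left ideal `Ae = {x | x * e = x}` (for `e` idempotent), as a submodule of `A`. -/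
def leftPart (A : Type) [Ring A] (e : A) : Submodule A A where
  carrier := {x | x * e = x}
  add_mem' := by intro a b ha hb; simp only [Set.mem_setOf_eq] at *; rw [add_mul, ha, hb]
  zero_mem' := by simp
  smul_mem' := by intro c x hx; simp only [Set.mem_setOf_eq, smul_eq_mul] at *;
                  rw [mul_assoc, hx]

/-- `Ae` as an object of `ModuleCat A`. -/
def AeMod (A : Type) [Ring A] (e : A) : ModuleCat.{0} A :=
  ModuleCat.of A (leftPart A e)

/-- `M` is Gorenstein projective: `Ext^i_A(M, A) = 0` for all `i > 0`. -/
def IsGorensteinProjective (A : Type) [Ring A] (M : ModuleCat.{0} A) : Prop :=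
  ∀ i : ℕ, 0 < i → ExtVanish A i M (ModuleCat.of A A)

/-- `M` is Gorenstein injective: `Ext^i_A(D(A), M) = 0` for all `i > 0`. -/
def IsGorensteinInjective (k A : Type) [Field k] [Ring A] [Algebra k A]
    (M : ModuleCat.{0} A) : Prop :=
  ∀ i : ℕ, 0 < i → ExtVanish A i (DualA k A) M

/-- `M ∈ gen_l(Ae)`: `M` has a projective resolution whose terms in degrees `≤ l`
lie in `add (Ae)`. -/
def GenLE (A : Type) [Ring A] (e : A) (l : ℕ) (M : ModuleCat.{0} A) : Prop :=
  ∃ (P : ℕ → ModuleCat.{0} A) (d : ∀ n : ℕ, (P (n + 1) →ₗ[A] P n)) (π : P 0 →ₗ[A] M),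
    (∀ n, Module.Projective A (P n)) ∧
    Function.Surjective π ∧
    Function.Exact (d 0) π ∧
    (∀ n, Function.Exact (d (n + 1)) (d n)) ∧
    (∀ n ≤ l, InAdd A (AeMod A e) (P n))

/-!
Write `B = A/⟨f⟩`. Restriction of scalars sends every projective `B`-module to an `A`-module of
projective dimension at most one: it is a summand of a direct sum of copies of `B`, and by
Schanuel's lemma `projdim ≤ 1` means that every syzygy is projective, a condition stable under
direct sums and summands. If `0 → K → P → M → 0` starts a projective resolution over `B`, pulling
back along `K → P` a surjection `Q ↠ P` from a projective `A`-module with projective kernel gives a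
syzygy of `M` over `A` which is an extension of `K` by a projective module. By induction,
`projdim_A M ≤ projdim_B M + 1`.
-/

section SplitExact

variable {A L N P : Type*} [Ring A] [AddCommGroup L] [AddCommGroup N] [AddCommGroup P]
  [Module A L] [Module A N] [Module A P] {f : L →ₗ[A] N} {g : N →ₗ[A] P}

def Function.Exact.linearEquivProdOfProjective [Module.Projective A P]
    (h : Function.Exact f g) (hf : Function.Injective f) (hg : Function.Surjective g) :
    N ≃ₗ[A] L × P :=
  (h.splitSurjectiveEquiv hf
    ⟨_, (Module.projective_lifting_property g LinearMap.id hg).choose_spec⟩).1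

theorem Module.Projective.of_shortExact_middle [Module.Projective A L] [Module.Projective A P]
    (hf : Function.Injective f) (h : Function.Exact f g) (hg : Function.Surjective g) :
    Module.Projective A N :=
  .of_equiv (h.linearEquivProdOfProjective hf hg).symm

theorem Module.Projective.of_shortExact_left [Module.Projective A N] [Module.Projective A P]
    (hf : Function.Injective f) (h : Function.Exact f g) (hg : Function.Surjective g) :
    Module.Projective A L :=
  let e := h.linearEquivProdOfProjective hf hg
  .of_split (e.symm.toLinearMap ∘ₗ LinearMap.inl A L P) (LinearMap.fst A L P ∘ₗ e.toLinearMap)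
    (by ext; simp)

theorem Function.Exact.prodMap {L' N' P' : Type*} [AddCommGroup L'] [AddCommGroup N']
    [AddCommGroup P'] [Module A L'] [Module A N'] [Module A P'] {f' : L' →ₗ[A] N'}
    {g' : N' →ₗ[A] P'} (h : Function.Exact f g) (h' : Function.Exact f' g') :
    Function.Exact (f.prodMap f') (g.prodMap g') := by
  rw [LinearMap.exact_iff] at h h' ⊢
  rw [LinearMap.ker_prodMap, LinearMap.range_prodMap, h, h']

theorem Function.Exact.finsuppMapRange (α : Type*) (h : Function.Exact f g) :
    Function.Exact (Finsupp.mapRange.linearMap (α := α) f) (Finsupp.mapRange.linearMap g) := by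
  refine LinearMap.exact_of_comp_of_mem_range ?_ fun v hv => ?_
  · ext i l : 2
    simp [h.apply_apply_eq_zero]
  · classical
    rw [← v.sum_single]
    refine Submodule.finsuppSum_mem _ _ _ _ fun i _ => ?_
    obtain ⟨l, hl⟩ := (h (v i)).mp (by simpa using DFunLike.congr_fun hv i)
    exact ⟨Finsupp.single i l, by simp [hl]⟩

instance Module.Projective.finsupp (α : Type*) [Module.Projective A P] :
    Module.Projective A (α →₀ P) := by
  classical
  exact .of_equiv (finsuppLequivDFinsupp A).symm

end SplitExact

section FiberProduct

variable {A P Q M : Type*} [Ring A] [AddCommGroup P] [AddCommGroup Q] [AddCommGroup M]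
  [Module A P] [Module A Q] [Module A M] (π : P →ₗ[A] M) (ρ : Q →ₗ[A] M)

abbrev fiberProduct : Submodule A (P × Q) :=
  LinearMap.eqLocus (π ∘ₗ LinearMap.fst A P Q) (ρ ∘ₗ LinearMap.snd A P Q)

namespace fiberProduct

def fst : fiberProduct π ρ →ₗ[A] P := LinearMap.fst A P Q ∘ₗ (fiberProduct π ρ).subtype

def snd : fiberProduct π ρ →ₗ[A] Q := LinearMap.snd A P Q ∘ₗ (fiberProduct π ρ).subtype

variable {π ρ} {L K : Type*} [AddCommGroup L] [AddCommGroup K] [Module A L] [Module A K]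

def inl {ι : L →ₗ[A] P} (h : Function.Exact ι π) : L →ₗ[A] fiberProduct π ρ :=
  LinearMap.codRestrict _ (LinearMap.inl A P Q ∘ₗ ι) fun l => by
    simp [h.apply_apply_eq_zero]

def inr {κ : K →ₗ[A] Q} (h : Function.Exact κ ρ) : K →ₗ[A] fiberProduct π ρ :=
  LinearMap.codRestrict _ (LinearMap.inr A P Q ∘ₗ κ) fun k => by
    simp [h.apply_apply_eq_zero]

theorem fst_surjective (hρ : Function.Surjective ρ) : Function.Surjective (fst π ρ) := fun p =>
  let ⟨q, hq⟩ := hρ (π p)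
  ⟨⟨(p, q), hq.symm⟩, rfl⟩

theorem snd_surjective (hπ : Function.Surjective π) : Function.Surjective (snd π ρ) := fun q =>
  let ⟨p, hp⟩ := hπ (ρ q)
  ⟨⟨(p, q), hp⟩, rfl⟩

theorem fst_injective (hρ : Function.Injective ρ) : Function.Injective (fst π ρ) := by
  rintro ⟨⟨p, q⟩, hpq⟩ ⟨⟨p', q'⟩, hpq'⟩ (rfl : p = p')
  have : ρ q = ρ q' := hpq.symm.trans hpq'
  simp [hρ this]

theorem inl_injective {ι : L →ₗ[A] P} (h : Function.Exact ι π) (hι : Function.Injective ι) :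
    Function.Injective (inl (ρ := ρ) h) :=
  fun _ _ e => hι congr(($e).1.1)

theorem inr_injective {κ : K →ₗ[A] Q} (h : Function.Exact κ ρ) (hκ : Function.Injective κ) :
    Function.Injective (inr (π := π) h) :=
  fun _ _ e => hκ congr(($e).1.2)

theorem exact_inl_snd {ι : L →ₗ[A] P} (h : Function.Exact ι π) :
    Function.Exact (inl (ρ := ρ) h) (snd π ρ) := by
  rintro ⟨⟨p, q⟩, hpq⟩
  constructor
  · rintro (rfl : q = 0)
    obtain ⟨l, rfl⟩ := (h p).mp (by simpa using hpq)
    exact ⟨l, rfl⟩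
  · rintro ⟨l, hl⟩
    rw [← hl]
    rfl

theorem exact_inr_fst {κ : K →ₗ[A] Q} (h : Function.Exact κ ρ) :
    Function.Exact (inr (π := π) h) (fst π ρ) := by
  rintro ⟨⟨p, q⟩, hpq⟩
  constructor
  · rintro (rfl : p = 0)
    obtain ⟨k, rfl⟩ := (h q).mp (by simpa using hpq.symm)
    exact ⟨k, rfl⟩
  · rintro ⟨k, hk⟩
    rw [← hk]
    rfl

theorem exact_fst_comp {p : M →ₗ[A] K} (h : Function.Exact ρ p) :
    Function.Exact (fst π ρ) (p ∘ₗ π) := fun x => by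
  rw [LinearMap.comp_apply, h]
  constructor
  · rintro ⟨q, hq⟩
    exact ⟨⟨(x, q), hq.symm⟩, rfl⟩
  · rintro ⟨⟨⟨_, q⟩, hpq⟩, rfl⟩
    exact ⟨q, hpq.symm⟩

end fiberProduct

end FiberProduct

section ProjectiveDimension

variable {A : Type} [Ring A]

theorem projDimLE_zero_iff {M : ModuleCat.{0} A} : ProjDimLE A 0 M ↔ Module.Projective A M :=
  ⟨fun ⟨_, ⟨e⟩, _⟩ => .of_equiv e.toLinearEquiv, fun h => ⟨M, ⟨Iso.refl M⟩, h⟩⟩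

theorem projDimLE_succ_iff {n : ℕ} {M : ModuleCat.{0} A} :
    ProjDimLE A (n + 1) M ↔ ∃ K : ModuleCat.{0} A, IsSyzygyOf A K M ∧ ProjDimLE A n K :=
  ⟨fun ⟨L, ⟨K, hK, hL⟩, hL'⟩ => ⟨K, hK, L, hL, hL'⟩,
    fun ⟨K, hK, L, hL, hL'⟩ => ⟨L, ⟨K, hK, hL⟩, hL'⟩⟩

theorem IsSyzygyOf.of_linearEquiv {K M M' : ModuleCat.{0} A} (e : M ≃ₗ[A] M')
    (h : IsSyzygyOf A K M) : IsSyzygyOf A K M' :=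
  let ⟨P, hP, ι, π, hι, hπ, hιπ⟩ := h
  ⟨P, hP, ι, e.toLinearMap ∘ₗ π, hι, e.surjective.comp hπ,
    LinearEquiv.postcomp_exact_iff_exact.mpr hιπ⟩

theorem IsNthSyzygyOf.of_linearEquiv {n : ℕ} {K M M' : ModuleCat.{0} A} (e : M ≃ₗ[A] M')
    (h : IsNthSyzygyOf A n K M) : IsNthSyzygyOf A n K M' :=
  match n, h with
  | 0, ⟨i⟩ => ⟨i ≪≫ e.toModuleIso⟩
  | _ + 1, ⟨L, hL, hK⟩ => ⟨L, hL.of_linearEquiv e, hK⟩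

theorem ProjDimLE.of_linearEquiv {n : ℕ} {M M' : ModuleCat.{0} A} (e : M ≃ₗ[A] M')
    (h : ProjDimLE A n M) : ProjDimLE A n M' :=
  let ⟨K, hK, hproj⟩ := h
  ⟨K, hK.of_linearEquiv e, hproj⟩

theorem isSyzygyOf_ker {P : Type} [AddCommGroup P] [Module A P] [Module.Projective A P]
    {M : ModuleCat.{0} A} (π : P →ₗ[A] M) (hπ : Function.Surjective π) :
    IsSyzygyOf A (.of A (LinearMap.ker π)) M :=
  ⟨.of A P, ‹_›, (LinearMap.ker π).subtype, π, Subtype.val_injective, hπ,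
    LinearMap.exact_subtype_ker_map π⟩

theorem exists_isSyzygyOf (M : ModuleCat.{0} A) : ∃ K, IsSyzygyOf A K M :=
  ⟨_, isSyzygyOf_ker _ (Finsupp.linearCombination_id_surjective A M)⟩

theorem IsSyzygyOf.prod {K K' M M' : ModuleCat.{0} A} (h : IsSyzygyOf A K M)
    (h' : IsSyzygyOf A K' M') : IsSyzygyOf A (.of A (K × K')) (.of A (M × M')) :=
  let ⟨P, _, ι, π, hι, hπ, hιπ⟩ := h
  let ⟨P', _, ι', π', hι', hπ', hιπ'⟩ := h'
  ⟨.of A (P × P'), inferInstance, ι.prodMap ι', π.prodMap π', hι.prodMap hι', hπ.prodMap hπ',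
    hιπ.prodMap hιπ'⟩

theorem IsSyzygyOf.finsupp (α : Type) {K M : ModuleCat.{0} A} (h : IsSyzygyOf A K M) :
    IsSyzygyOf A (.of A (α →₀ K)) (.of A (α →₀ M)) :=
  let ⟨P, _, ι, π, hι, hπ, hιπ⟩ := h
  ⟨.of A (α →₀ P), inferInstance, Finsupp.mapRange.linearMap ι, Finsupp.mapRange.linearMap π,
    Finsupp.mapRange_injective _ (map_zero ι) hι, Finsupp.mapRange_surjective _ (map_zero π) hπ,
    hιπ.finsuppMapRange α⟩

open fiberProduct

theorem IsSyzygyOf.of_shortExact {L N K K₁ : ModuleCat.{0} A} [Module.Projective A L]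
    {l : L →ₗ[A] N} {q : N →ₗ[A] K} (hl : Function.Injective l) (hlq : Function.Exact l q)
    (hq : Function.Surjective q) (h : IsSyzygyOf A K₁ K) : IsSyzygyOf A K₁ N :=
  let ⟨_, _, _, π, hι, hπ, hιπ⟩ := h
  have : Module.Projective A (fiberProduct π q) :=
    .of_shortExact_middle (inr_injective hlq hl) (exact_inr_fst hlq) (fst_surjective hq)
  ⟨.of A (fiberProduct π q), this, inl hιπ, snd π q, inl_injective hιπ hι, snd_surjective hπ,
    exact_inl_snd hιπ⟩

theorem ProjDimLE.of_shortExact {m : ℕ} {L N K : ModuleCat.{0} A} [Module.Projective A L]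
    {l : L →ₗ[A] N} {q : N →ₗ[A] K} (hl : Function.Injective l) (hlq : Function.Exact l q)
    (hq : Function.Surjective q) (h : ProjDimLE A m K) : ProjDimLE A m N := by
  cases m with
  | zero =>
    have := projDimLE_zero_iff.mp h
    exact projDimLE_zero_iff.mpr (.of_shortExact_middle hl hlq hq)
  | succ m =>
    obtain ⟨K₁, hK₁, h⟩ := projDimLE_succ_iff.mp h
    exact projDimLE_succ_iff.mpr ⟨K₁, hK₁.of_shortExact hl hlq hq, h⟩

theorem ProjDimLE.projective_of_isSyzygyOf {K M : ModuleCat.{0} A} (hM : ProjDimLE A 1 M)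
    (hK : IsSyzygyOf A K M) : Module.Projective A K := by
  -- Schanuel's lemma: the fibre product of the two covers is an extension of each cover by the
  -- other syzygy.
  obtain ⟨K', ⟨_, _, ι', π', hι', hπ', hιπ'⟩, hK'⟩ := projDimLE_succ_iff.mp hM
  obtain ⟨_, _, ι, π, hι, hπ, hιπ⟩ := hK
  have := projDimLE_zero_iff.mp hK'
  have : Module.Projective A (fiberProduct π π') :=
    .of_shortExact_middle (inr_injective hιπ' hι') (exact_inr_fst hιπ') (fst_surjective hπ')
  exact .of_shortExact_left (inl_injective (ρ := π') hιπ hι) (exact_inl_snd hιπ) (snd_surjective hπ)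

theorem ProjDimLE.one_of_prod {C M : ModuleCat.{0} A} (h : ProjDimLE A 1 (.of A (C × M))) :
    ProjDimLE A 1 M := by
  obtain ⟨KC, hKC⟩ := exists_isSyzygyOf C
  obtain ⟨KM, hKM⟩ := exists_isSyzygyOf M
  have := h.projective_of_isSyzygyOf (hKC.prod hKM)
  have : Module.Projective A KM :=
    .of_split (LinearMap.inr A KC KM) (LinearMap.snd A KC KM) (LinearMap.snd_comp_inr A KC KM)
  exact projDimLE_succ_iff.mpr ⟨KM, hKM, projDimLE_zero_iff.mpr this⟩

theorem ProjDimLE.one_of_retract {X M : ModuleCat.{0} A} (i : M →ₗ[A] X) (r : X →ₗ[A] M)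
    (hri : r ∘ₗ i = LinearMap.id) (h : ProjDimLE A 1 X) : ProjDimLE A 1 M :=
  ProjDimLE.one_of_prod (C := .of A (LinearMap.ker r)) <| h.of_linearEquiv
    ((LinearMap.exact_subtype_ker_map r).splitSurjectiveEquiv Subtype.val_injective ⟨i, hri⟩).1

theorem ProjDimLE.one_finsupp (α : Type) {N : ModuleCat.{0} A} (h : ProjDimLE A 1 N) :
    ProjDimLE A 1 (.of A (α →₀ N)) := by
  obtain ⟨K, hK, hKproj⟩ := projDimLE_succ_iff.mp h
  have := projDimLE_zero_iff.mp hKproj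
  exact projDimLE_succ_iff.mpr ⟨_, hK.finsupp α, projDimLE_zero_iff.mpr inferInstance⟩

theorem ProjDimLE.succ_of_shortExact {m : ℕ} {K P M : ModuleCat.{0} A} {ι : K →ₗ[A] P}
    {p : P →ₗ[A] M} (hι : Function.Injective ι) (hιp : Function.Exact ι p)
    (hp : Function.Surjective p) (hP : ProjDimLE A 1 P) (hK : ProjDimLE A m K) :
    ProjDimLE A (m + 1) M := by
  obtain ⟨L, ⟨Q, hQ, ℓ, g, hℓ, hg, hℓg⟩, hL⟩ := projDimLE_succ_iff.mp hP
  have := projDimLE_zero_iff.mp hL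
  refine projDimLE_succ_iff.mpr ⟨.of A (fiberProduct g ι),
    ⟨Q, hQ, fst g ι, p ∘ₗ g, fst_injective hι, hp.comp hg, exact_fst_comp hιp⟩, ?_⟩
  exact hK.of_shortExact (inl_injective hℓg hℓ) (exact_inl_snd hℓg) (snd_surjective hg)

end ProjectiveDimension

section RestrictScalars

variable {A B : Type} [Ring A] [Ring B] (φ : A →+* B)

def restrictScalarsFinsuppEquiv (α : Type) :
    (α →₀ (ModuleCat.restrictScalars φ).obj (.of B B)) ≃ₗ[A]
      (ModuleCat.restrictScalars φ).obj (.of B (α →₀ B)) :=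
  { Equiv.refl _ with
    map_add' := fun _ _ => rfl
    map_smul' := fun _ _ => rfl }

theorem projDimLE_one_restrictScalars_of_projective
    (hB : ProjDimLE A 1 ((ModuleCat.restrictScalars φ).obj (.of B B)))
    {P : ModuleCat.{0} B} [Module.Projective B P] :
    ProjDimLE A 1 ((ModuleCat.restrictScalars φ).obj P) := by
  obtain ⟨s, hs⟩ := Module.projective_def'.mp ‹Module.Projective B P›
  let res := ModuleCat.restrictScalars φ
  exact ProjDimLE.one_of_retract (res.map (ModuleCat.ofHom s)).hom
    (res.map (ModuleCat.ofHom (Finsupp.linearCombination B id))).hom (LinearMap.ext fun x => LinearMap.congr_fun hs x)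
    ((hB.one_finsupp P).of_linearEquiv (restrictScalarsFinsuppEquiv φ P))

theorem projDimLE_succ_restrictScalars
    (hB : ProjDimLE A 1 ((ModuleCat.restrictScalars φ).obj (.of B B))) (n : ℕ)
    (M : ModuleCat.{0} B) (hM : ProjDimLE B n M) :
    ProjDimLE A (n + 1) ((ModuleCat.restrictScalars φ).obj M) := by
  induction n generalizing M with
  | zero =>
    have := projDimLE_zero_iff.mp hM
    exact projDimLE_one_restrictScalars_of_projective φ hB
  | succ n ih =>
    obtain ⟨K, ⟨P, hP, ι, π, hι, hπ, hιπ⟩, hK⟩ := projDimLE_succ_iff.mp hM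
    let res := ModuleCat.restrictScalars φ
    exact ProjDimLE.succ_of_shortExact (ι := (res.map (ModuleCat.ofHom ι)).hom)
      (p := (res.map (ModuleCat.ofHom π)).hom) hι hιπ hπ
      (projDimLE_one_restrictScalars_of_projective φ hB) (ih K hK)

end RestrictScalars

section IdempotentIdeal

variable {A : Type} [Ring A]

theorem idemIdeal_eq_asIdeal_span (f : A) :
    idemIdeal A f = (TwoSidedIdeal.span {f}).asIdeal := by
  apply le_antisymm
  · refine Submodule.span_le.mpr ?_
    rintro _ ⟨b, rfl⟩
    exact TwoSidedIdeal.mem_asIdeal.mpr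
      (TwoSidedIdeal.mul_mem_right _ _ _ (TwoSidedIdeal.subset_span rfl))
  · intro x hx
    rw [TwoSidedIdeal.mem_asIdeal, TwoSidedIdeal.mem_span_iff_mem_addSubgroup_closure] at hx
    refine (AddSubgroup.closure_le (idemIdeal A f).toAddSubgroup).mpr ?_ hx
    rintro _ ⟨_, ⟨a, -, y, hy, rfl⟩, b, -, rfl⟩
    rw [Set.mem_singleton_iff.mp hy]
    change a * f * b ∈ idemIdeal A f
    rw [mul_assoc]
    exact (idemIdeal A f).smul_mem a (Submodule.subset_span ⟨b, rfl⟩)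

def quotModEquiv (f : A) :
    quotMod A f ≃ₗ[A] (ModuleCat.restrictScalars (RingCon.mk' (TwoSidedIdeal.span {f}).ringCon)).obj
      (.of _ (TwoSidedIdeal.span {f}).ringCon.Quotient) :=
  let mk : A →ₗ[A] (ModuleCat.restrictScalars (RingCon.mk' (TwoSidedIdeal.span {f}).ringCon)).obj
      (.of _ (TwoSidedIdeal.span {f}).ringCon.Quotient) :=
    { toFun := RingCon.mk' _
      map_add' := map_add _
      map_smul' := map_mul (RingCon.mk' _) }
  have hker : LinearMap.ker mk = idemIdeal A f := by
    ext x
    rw [idemIdeal_eq_asIdeal_span, TwoSidedIdeal.mem_asIdeal, TwoSidedIdeal.mem_iff,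
      LinearMap.mem_ker, ← RingCon.eq]
    rfl
  (Submodule.quotEquivOfEq _ _ hker.symm).trans
    (mk.quotKerEquivOfSurjective (RingCon.mk'_surjective _))

end IdempotentIdeal

theorem stmt_5_general (A : Type) [Ring A]
    (f : A)
    (hpd : ProjDimLE A 1 (quotMod A f))
    (hgl : ∃ n : ℕ, ∀ M : ModuleCat.{0} ((TwoSidedIdeal.span {f}).ringCon.Quotient),
      Module.Finite ((TwoSidedIdeal.span {f}).ringCon.Quotient) M →
      ProjDimLE ((TwoSidedIdeal.span {f}).ringCon.Quotient) n M) :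
    ∀ M : ModuleCat.{0} ((TwoSidedIdeal.span {f}).ringCon.Quotient),
      Module.Finite ((TwoSidedIdeal.span {f}).ringCon.Quotient) M →
      ∃ n : ℕ, ProjDimLE A n
        ((ModuleCat.restrictScalars (RingCon.mk' (TwoSidedIdeal.span {f}).ringCon)).obj M) := by
  obtain ⟨n, hn⟩ := hgl
  intro M hM
  exact ⟨n + 1, projDimLE_succ_restrictScalars _ (hpd.of_linearEquiv (quotModEquiv f)) n M
    (hn M hM)⟩

/-- If `projdim_A(A/⟨f⟩) ≤ 1` and `A/⟨f⟩` has finite global dimension,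
then every finitely generated `A/⟨f⟩`-module has finite projective dimension over `A`. -/
theorem stmt_5 (k A : Type) [Field k] [Ring A] [Algebra k A] [FiniteDimensional k A]
    (f : A) (hf : IsIdempotentElem f)
    (hpd : ProjDimLE A 1 (quotMod A f))
    (hgl : ∃ n : ℕ, ∀ M : ModuleCat.{0} ((TwoSidedIdeal.span {f}).ringCon.Quotient),
      Module.Finite ((TwoSidedIdeal.span {f}).ringCon.Quotient) M →
      ProjDimLE ((TwoSidedIdeal.span {f}).ringCon.Quotient) n M) :
    ∀ M : ModuleCat.{0} ((TwoSidedIdeal.span {f}).ringCon.Quotient),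
      Module.Finite ((TwoSidedIdeal.span {f}).ringCon.Quotient) M →
      ∃ n : ℕ, ProjDimLE A n
        ((ModuleCat.restrictScalars (RingCon.mk' (TwoSidedIdeal.span {f}).ringCon)).obj M) :=
  stmt_5_general A f hpd hgl

end
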